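/- arXiv:1511.07156 — 3 statements merged into one kernel-verified Lean document; each statement's English description precedes it below -/
import Mathlib

section
/- Let n ≥ 1 be a natural number and let c be a real number. The function x ↦ x^c·|ψ^{(n)}(x)| is decreasing on (0,∞) if and only if c ≤ n, where ψ^{(n)} denotes the n-th derivative of the digamma function ψ = Γ'/Γ of the classical Euler gamma function Γ. -/
open Real Filter Topology Set

/-- The digamma function `ψ = Γ'/Γ`, as the derivative of `ln ∘ Γ`. -/
noncomputable def digamma (x : ℝ) : ℝ := deriv (fun y => Real.log (Real.Gamma y)) x

namespace Stmt16Aux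

/-- The partial-fraction series `∑_j 1/(x+j)^m`. -/
noncomputable def P (m : ℕ) (x : ℝ) : ℝ := ∑' j : ℕ, ((x + j) ^ m)⁻¹

lemma summable_P {m : ℕ} (hm : 2 ≤ m) {x : ℝ} (hx : 0 < x) :
    Summable (fun j : ℕ => ((x + j) ^ m)⁻¹) := by
  rw [← summable_nat_add_iff 1]
  have h3 : Summable (fun n : ℕ => ((n : ℝ) ^ 2)⁻¹) :=
    Real.summable_nat_pow_inv.2 (by norm_num)
  have h4 : Summable (fun j : ℕ => (((j : ℝ) + 1) ^ 2)⁻¹) := by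
    have := (summable_nat_add_iff (f := fun n : ℕ => ((n : ℝ) ^ 2)⁻¹) 1).2 h3
    exact this.congr (fun j => by push_cast; ring_nf)
  refine h4.of_nonneg_of_le (fun j => by positivity) (fun j => ?_)
  have h1 : (0:ℝ) < (j:ℝ) + 1 := by positivity
  have h2 : ((j:ℝ) + 1) ^ 2 ≤ (x + ((j + 1 : ℕ) : ℝ)) ^ m := by
    push_cast
    calc ((j:ℝ)+1)^2 ≤ ((j:ℝ)+1)^m := pow_le_pow_right₀ (by linarith) hm
      _ ≤ (x + ((j:ℝ)+1))^m := by apply pow_le_pow_left₀ (by linarith) (by linarith)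
  exact inv_anti₀ (by positivity) h2

lemma hasDerivAt_inv_pow {m : ℕ} (hm : 1 ≤ m) (k x : ℝ) (h : 0 < x + k) :
    HasDerivAt (fun y => ((y + k) ^ m)⁻¹) (-(m:ℝ) * ((x + k) ^ (m+1))⁻¹) x := by
  have h1 : HasDerivAt (fun y : ℝ => y + k) 1 x := (hasDerivAt_id x).add_const k
  have h2 : HasDerivAt (fun y => (y + k) ^ m) ((m:ℝ) * (x+k)^(m-1) * 1) x := h1.pow m
  have h3 := h2.inv (by positivity : (x + k) ^ m ≠ 0)
  refine h3.congr_deriv ?_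
  obtain ⟨l, rfl⟩ := Nat.exists_eq_add_of_le hm
  have hne : x + k ≠ 0 := h.ne'
  rw [Nat.add_sub_cancel_left]
  field_simp
  ring

lemma hasDerivAt_P {m : ℕ} (hm : 2 ≤ m) {x : ℝ} (hx : 0 < x) :
    HasDerivAt (P m) (-(m:ℝ) * P (m+1) x) x := by
  have hx2 : 0 < x / 2 := by linarith
  have hmem : x ∈ Set.Ioi (x/2) := by simp; linarith
  have key := hasDerivAt_tsum_of_isPreconnected
    (u := fun j : ℕ => (m:ℝ) * ((x/2 + j)^(m+1))⁻¹)
    (g := fun (j : ℕ) (y : ℝ) => ((y + j)^m)⁻¹)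
    (g' := fun (j : ℕ) (y : ℝ) => -(m:ℝ) * ((y + j)^(m+1))⁻¹)
    ((summable_P (by omega) hx2).mul_left _) (isOpen_Ioi (a := x/2))
    (isPreconnected_Ioi)
    (fun j y hy => hasDerivAt_inv_pow (by omega) j y (by simp only [Set.mem_Ioi] at hy; have hj : (0:ℝ) ≤ j := Nat.cast_nonneg j; linarith))
    (fun j y hy => ?_) hmem (summable_P hm hx) hmem
  · have : (fun z : ℝ => ∑' j : ℕ, ((z + j)^m)⁻¹) = P m := rfl
    rw [this] at key
    refine key.congr_deriv ?_
    rw [P, ← tsum_mul_left]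
  · simp only [Set.mem_Ioi] at hy
    have h1 : 0 < y + (j:ℝ) := by
      have hj : (0:ℝ) ≤ j := Nat.cast_nonneg j; linarith
    have h2 : x/2 + (j:ℝ) ≤ y + j := by linarith
    rw [norm_mul, norm_neg, Real.norm_natCast, norm_inv, norm_pow, Real.norm_eq_abs,
      abs_of_pos h1]
    have h3 : ((y + (j:ℝ))^(m+1))⁻¹ ≤ ((x/2 + j)^(m+1))⁻¹ := by
      apply inv_anti₀ (by positivity)
      exact pow_le_pow_left₀ (by positivity) h2 _
    have hm0 : (0:ℝ) ≤ (m:ℝ) := Nat.cast_nonneg m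
    exact mul_le_mul_of_nonneg_left h3 hm0

lemma P_pos {m : ℕ} (hm : 2 ≤ m) {x : ℝ} (hx : 0 < x) : 0 < P m x := by
  apply Summable.tsum_pos (summable_P hm hx) (fun j => by
    have : (0:ℝ) ≤ j := Nat.cast_nonneg j
    positivity) 0
  norm_num
  positivity

noncomputable def dg (x : ℝ) : ℝ :=
  -Real.eulerMascheroniConstant + ∑' k : ℕ, (((k : ℝ) + 1)⁻¹ - (x + k)⁻¹)

lemma bound_b {a b : ℝ} (ha : 0 < a) (k : ℕ) (x : ℝ) (hx : x ∈ Set.Icc a b) :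
    ‖((k : ℝ) + 1)⁻¹ - (x + k)⁻¹‖ ≤
      (if k = 0 then 1 + a⁻¹ else (b + 1) * ((k : ℝ) ^ 2)⁻¹) := by
  obtain ⟨hax, hxb⟩ := hx
  have hx0 : 0 < x := lt_of_lt_of_le ha hax
  match k with
  | 0 =>
    simp only [if_pos rfl, Nat.cast_zero, add_zero, zero_add]
    rw [Real.norm_eq_abs]
    have h1 : |(1:ℝ)⁻¹ - x⁻¹| ≤ |(1:ℝ)⁻¹| + |x⁻¹| := abs_sub _ _
    have h2 : |x⁻¹| = x⁻¹ := abs_of_pos (by positivity)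
    have h3 : x⁻¹ ≤ a⁻¹ := inv_anti₀ ha hax
    simp only [abs_one, inv_one] at h1 h2 ⊢
    rw [h2] at h1
    simp only [if_true]
    linarith
  | k + 1 =>
    simp only [if_neg (Nat.succ_ne_zero k)]
    push_cast
    have hk1 : (0:ℝ) < (k:ℝ) + 1 := by positivity
    have hd : (0:ℝ) < ((k:ℝ) + 1 + 1) * (x + ((k:ℝ)+1)) := by positivity
    have he : ((k:ℝ) + 1 + 1)⁻¹ - (x + ((k:ℝ)+1))⁻¹
        = (x - 1) / (((k:ℝ) + 1 + 1) * (x + ((k:ℝ)+1))) := by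
      field_simp
      ring
    rw [Real.norm_eq_abs, he, abs_div, abs_of_pos hd]
    rw [div_le_iff₀ hd]
    have h1 : |x - 1| ≤ b + 1 := by
      rw [abs_le]; constructor <;> nlinarith
    have h2 : ((k:ℝ)+1)^2 ≤ (((k:ℝ) + 1 + 1) * (x + ((k:ℝ)+1))) := by nlinarith
    calc |x - 1| ≤ b + 1 := h1
      _ = (b+1) * (((k:ℝ)+1)^2)⁻¹ * ((k:ℝ)+1)^2 := by field_simp
      _ ≤ (b+1) * (((k:ℝ)+1)^2)⁻¹ * (((k:ℝ) + 1 + 1) * (x + ((k:ℝ)+1))) := by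
          have hb1 : (0:ℝ) ≤ b + 1 := by nlinarith
          have := mul_le_mul_of_nonneg_left h2 (by positivity : (0:ℝ) ≤ (b+1) * (((k:ℝ)+1)^2)⁻¹)
          linarith [this]

lemma summable_bound (a b : ℝ) :
    Summable (fun k : ℕ => if k = 0 then 1 + a⁻¹ else (b + 1) * ((k : ℝ) ^ 2)⁻¹) := by
  rw [← summable_nat_add_iff 1]
  have h3 : Summable (fun n : ℕ => ((n : ℝ) ^ 2)⁻¹) :=
    Real.summable_nat_pow_inv.2 (by norm_num)
  have h4 := ((summable_nat_add_iff 1).2 h3).mul_left (b+1)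
  exact h4.congr (fun j => by simp [Nat.succ_ne_zero])

lemma summable_b {x : ℝ} (hx : 0 < x) :
    Summable (fun k : ℕ => ((k : ℝ) + 1)⁻¹ - (x + k)⁻¹) := by
  apply Summable.of_norm_bounded (summable_bound x x)
  intro k
  exact bound_b hx k x ⟨le_refl x, le_refl x⟩


-- uniform convergence of the derivative sequence on Icc a b
lemma tuo_derivs {a b : ℝ} (ha : 0 < a) :
    TendstoUniformlyOn
      (fun (n:ℕ) (y:ℝ) => Real.log n - ∑ m ∈ Finset.range (n+1), (y + m)⁻¹)
      dg atTop (Set.Icc a b) := by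
  have hsplit : ∀ (n : ℕ) (y : ℝ),
      Real.log n - ∑ m ∈ Finset.range (n+1), (y + m)⁻¹
        = (Real.log n - ∑ m ∈ Finset.range (n+1), ((m:ℝ) + 1)⁻¹)
          + ∑ m ∈ Finset.range (n+1), (((m:ℝ) + 1)⁻¹ - (y + m)⁻¹) := by
    intro n y
    rw [Finset.sum_sub_distrib]
    ring
  have hdg : ∀ y : ℝ, dg y = -Real.eulerMascheroniConstant
      + ∑' k : ℕ, (((k : ℝ) + 1)⁻¹ - (y + k)⁻¹) := fun y => rfl
  have hE : Tendsto (fun n : ℕ => Real.log n - ∑ m ∈ Finset.range (n+1), ((m:ℝ) + 1)⁻¹)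
      atTop (𝓝 (-Real.eulerMascheroniConstant)) := by
    have h1 : Tendsto (fun n : ℕ => ((harmonic (n+1) : ℝ) - Real.log (n+1)))
        atTop (𝓝 Real.eulerMascheroniConstant) :=
      (Real.tendsto_harmonic_sub_log.comp (tendsto_add_atTop_nat 1)).congr
        (fun n => by simp only [Function.comp_apply]; push_cast; ring)
    have h2 : Tendsto (fun n : ℕ => Real.log ((n:ℝ)+1) - Real.log n) atTop (𝓝 0) :=
      Real.tendsto_log_nat_add_one_sub_log
    have h3 := (h1.add h2).neg
    simp only [add_zero, neg_zero] at h3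
    apply h3.congr
    intro n
    have hharm : (harmonic (n+1) : ℝ) = ∑ m ∈ Finset.range (n+1), ((m:ℝ) + 1)⁻¹ := by
      rw [harmonic]
      push_cast
      rfl
    push_cast
    rw [hharm]
    ring
  -- uniform convergence of partial sums of b
  have hU : TendstoUniformlyOn
      (fun (N:ℕ) (y:ℝ) => ∑ m ∈ Finset.range N, (((m:ℝ) + 1)⁻¹ - (y + m)⁻¹))
      (fun y => ∑' k : ℕ, (((k : ℝ) + 1)⁻¹ - (y + k)⁻¹)) atTop (Set.Icc a b) :=
    tendstoUniformlyOn_tsum_nat (summable_bound a b) (fun k y hy => bound_b ha k y hy)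
  have hU' : TendstoUniformlyOn
      (fun (n:ℕ) (y:ℝ) => ∑ m ∈ Finset.range (n+1), (((m:ℝ) + 1)⁻¹ - (y + m)⁻¹))
      (fun y => ∑' k : ℕ, (((k : ℝ) + 1)⁻¹ - (y + k)⁻¹)) atTop (Set.Icc a b) :=
    fun u hu => (tendsto_add_atTop_nat 1).eventually (hU u hu)
  have hC : TendstoUniformlyOn
      (fun (n:ℕ) (_:ℝ) => Real.log n - ∑ m ∈ Finset.range (n+1), ((m:ℝ) + 1)⁻¹)
      (fun _ => -Real.eulerMascheroniConstant) atTop (Set.Icc a b) :=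
    hE.tendstoUniformlyOn_const _
  have := hC.add hU'
  apply this.congr_right (fun y _ => (hdg y).symm) |>.congr
  · filter_upwards with n
    intro y hy
    exact (hsplit n y).symm

lemma hasDerivAt_log_Gamma {x : ℝ} (hx : 0 < x) :
    HasDerivAt (fun y => Real.log (Real.Gamma y)) (dg x) x := by
  apply hasDerivAt_of_tendstoLocallyUniformlyOn (isOpen_Ioi (a := (0:ℝ)))
    (f := fun (n:ℕ) (y:ℝ) => Real.BohrMollerup.logGammaSeq y n)
    (f' := fun (n:ℕ) (y:ℝ) => Real.log n - ∑ m ∈ Finset.range (n+1), (y + m)⁻¹)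
    ?_ ?_ (fun y hy => Real.BohrMollerup.tendsto_log_gamma hy) hx
  · rw [tendstoLocallyUniformlyOn_iff_forall_isCompact isOpen_Ioi]
    intro K hK hKc
    rcases K.eq_empty_or_nonempty with rfl | hne
    · intro u hu
      filter_upwards with n y hy
      exact absurd hy (Set.notMem_empty y)
    · have haK : sInf K ∈ K := hKc.sInf_mem hne
      have ha : 0 < sInf K := hK haK
      apply (tuo_derivs (a := sInf K) (b := sSup K) ha).mono
      intro y hy
      exact ⟨csInf_le hKc.bddBelow hy, le_csSup hKc.bddAbove hy⟩
  · filter_upwards with n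
    intro y hy
    simp only [Set.mem_Ioi] at hy
    have h0 : HasDerivAt (fun z : ℝ => z * Real.log n + Real.log (n.factorial))
        (Real.log n) y := (hasDerivAt_mul_const _).add_const _
    have h2 : HasDerivAt (fun z : ℝ => ∑ m ∈ Finset.range (n+1), Real.log (z + m))
        (∑ m ∈ Finset.range (n+1), (y + m)⁻¹) y := by
      apply HasDerivAt.fun_sum
      intro m hm
      have hpos : (0:ℝ) < y + m := by
        have : (0:ℝ) ≤ m := Nat.cast_nonneg m
        linarith
      have := ((hasDerivAt_id y).add_const (m:ℝ)).log hpos.ne'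
      simpa [one_div] using this
    have := h0.sub h2
    simp only [Real.BohrMollerup.logGammaSeq]
    exact this


lemma digamma_eq {x : ℝ} (hx : 0 < x) : digamma x = dg x :=
  (hasDerivAt_log_Gamma hx).deriv

lemma hasDerivAt_dg {x : ℝ} (hx : 0 < x) : HasDerivAt dg (P 2 x) x := by
  have hx2 : 0 < x / 2 := by linarith
  have hmem : x ∈ Set.Ioi (x/2) := by simp; linarith
  have key := hasDerivAt_tsum_of_isPreconnected
    (u := fun j : ℕ => ((x/2 + j)^2)⁻¹)
    (g := fun (k : ℕ) (y : ℝ) => ((k:ℝ) + 1)⁻¹ - (y + k)⁻¹)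
    (g' := fun (k : ℕ) (y : ℝ) => ((y + k)^2)⁻¹)
    (summable_P (le_refl 2) hx2) (isOpen_Ioi (a := x/2)) isPreconnected_Ioi
    (fun k y hy => ?_) (fun k y hy => ?_) hmem (summable_b hx) hmem
  · have h3 : HasDerivAt (fun z : ℝ => -Real.eulerMascheroniConstant
        + ∑' k : ℕ, (((k:ℝ)+1)⁻¹ - (z+(k:ℝ))⁻¹)) (∑' k : ℕ, ((x + (k:ℝ))^2)⁻¹) x :=
      key.const_add _
    exact h3
  · -- HasDerivAt of each term
    simp only [Set.mem_Ioi] at hy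
    have hpos : (0:ℝ) < y + k := by
      have : (0:ℝ) ≤ k := Nat.cast_nonneg k
      linarith
    have h1 : HasDerivAt (fun z : ℝ => (z + (k:ℝ))⁻¹) (-1 / (y + k)^2) y := by
      simpa using ((hasDerivAt_id y).add_const (k:ℝ)).fun_inv hpos.ne'
    have := h1.const_sub (((k:ℝ) + 1)⁻¹)
    convert this using 1
    field_simp
  · -- bound
    simp only [Set.mem_Ioi] at hy
    have hpos : (0:ℝ) < y + k := by
      have : (0:ℝ) ≤ k := Nat.cast_nonneg k
      linarith
    rw [Real.norm_eq_abs, abs_of_pos (by positivity)]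
    apply inv_anti₀ (by positivity)
    apply pow_le_pow_left₀ (by positivity)
    have : (0:ℝ) ≤ k := Nat.cast_nonneg k
    linarith

lemma digamma_eqOn : Set.EqOn digamma dg (Set.Ioi 0) := fun x hx => digamma_eq hx

lemma iteratedDeriv_digamma {m : ℕ} (hm : 1 ≤ m) :
    ∀ x ∈ Set.Ioi (0:ℝ), iteratedDeriv m digamma x =
      (-1) ^ (m+1) * (m.factorial : ℝ) * P (m+1) x := by
  induction m, hm using Nat.le_induction with
  | base =>
    intro x hx
    simp only [Set.mem_Ioi] at hx
    rw [iteratedDeriv_one]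
    have hev : digamma =ᶠ[𝓝 x] dg :=
      Filter.eventuallyEq_of_mem ((isOpen_Ioi (a := (0:ℝ))).mem_nhds hx) digamma_eqOn
    rw [hev.deriv_eq, (hasDerivAt_dg hx).deriv]
    norm_num
  | succ m hm ih =>
    intro x hx
    simp only [Set.mem_Ioi] at hx
    rw [iteratedDeriv_succ]
    have hev : iteratedDeriv m digamma
        =ᶠ[𝓝 x] (fun y => (-1) ^ (m+1) * (m.factorial : ℝ) * P (m+1) y) :=
      Filter.eventuallyEq_of_mem ((isOpen_Ioi (a := (0:ℝ))).mem_nhds hx) (fun y hy => ih y hy)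
    rw [hev.deriv_eq]
    have hd : HasDerivAt (fun y => (-1) ^ (m+1) * (m.factorial : ℝ) * P (m+1) y)
        ((-1) ^ (m+1) * (m.factorial : ℝ) * (-((m:ℝ)+1) * P (m+2) x)) x := by
      have := (hasDerivAt_P (m := m+1) (by omega) hx).const_mul
        ((-1) ^ (m+1) * (m.factorial : ℝ))
      refine this.congr_deriv ?_
      push_cast
      ring
    rw [hd.deriv]
    rw [Nat.factorial_succ]
    push_cast
    ring

lemma pow_succ_sub_bounds (m : ℕ) {v : ℝ} (hv : 0 ≤ v) :
    ((m:ℝ)+1) * v^m ≤ (v+1)^(m+1) - v^(m+1) ∧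
      (v+1)^(m+1) - v^(m+1) ≤ ((m:ℝ)+1) * (v+1)^m := by
  induction m with
  | zero => norm_num
  | succ m ih =>
    obtain ⟨h1, h2⟩ := ih
    have hv1 : (0:ℝ) ≤ v + 1 := by linarith
    have hpm : (0:ℝ) ≤ v^m := pow_nonneg hv m
    have hpm1 : (0:ℝ) ≤ (v+1)^m := pow_nonneg hv1 m
    constructor
    · have e : (v+1)^(m+2) - v^(m+2) = (v+1)*((v+1)^(m+1) - v^(m+1)) + v^(m+1) := by ring
      rw [e]
      have h3 : (v+1) * (((m:ℝ)+1) * v^m) ≤ (v+1)*((v+1)^(m+1) - v^(m+1)) :=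
        mul_le_mul_of_nonneg_left h1 hv1
      have h4 : (v+1) * (((m:ℝ)+1) * v^m) = ((m:ℝ)+1) * v^(m+1) + ((m:ℝ)+1)*v^m := by ring
      push_cast
      nlinarith
    · have e : (v+1)^(m+2) - v^(m+2) = (v+1)*((v+1)^(m+1) - v^(m+1)) + v^(m+1) := by ring
      rw [e]
      have h3 : (v+1)*((v+1)^(m+1) - v^(m+1)) ≤ (v+1) * (((m:ℝ)+1) * (v+1)^m) :=
        mul_le_mul_of_nonneg_left h2 hv1
      have h5 : v^(m+1) ≤ (v+1)^(m+1) := pow_le_pow_left₀ hv (by linarith) _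
      have h4 : (v+1) * (((m:ℝ)+1)*(v+1)^m) = ((m:ℝ)+1)*(v+1)^(m+1) := by ring
      push_cast
      nlinarith

lemma lemA {m : ℕ} (hm : 1 ≤ m) {v : ℝ} (hv : 0 < v) :
    (m:ℝ) * ((v+1)^(m+1))⁻¹ ≤ (v^m)⁻¹ - ((v+1)^m)⁻¹ := by
  obtain ⟨k, rfl⟩ : ∃ k, m = k + 1 := ⟨m - 1, by omega⟩
  have hv1 : (0:ℝ) < v + 1 := by linarith
  obtain ⟨hlow, _⟩ := pow_succ_sub_bounds k hv.le
  have hd : (v^(k+1))⁻¹ - ((v+1)^(k+1))⁻¹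
      = ((v+1)^(k+1) - v^(k+1)) / (v^(k+1) * (v+1)^(k+1)) := by
    field_simp
  have main : ((k:ℝ)+1) * (v^(k+1) * (v+1)^(k+1))
      ≤ ((v+1)^(k+1) - v^(k+1)) * (v+1)^(k+1+1) := by
    calc ((k:ℝ)+1) * (v^(k+1) * (v+1)^(k+1))
        = (((k:ℝ)+1) * v^k) * ((v+1)^(k+1) * v) := by ring
      _ ≤ ((v+1)^(k+1) - v^(k+1)) * ((v+1)^(k+1) * (v+1)) := by
          apply mul_le_mul hlow _ (by positivity)
            (by have := pow_le_pow_left₀ hv.le (by linarith : v ≤ v+1) (k+1); linarith)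
          apply mul_le_mul_of_nonneg_left (by linarith) (by positivity)
      _ = ((v+1)^(k+1) - v^(k+1)) * (v+1)^(k+1+1) := by ring
  have h2 := (div_le_div_iff₀ (by positivity : (0:ℝ) < (v+1)^(k+1+1))
      (by positivity : (0:ℝ) < v^(k+1) * (v+1)^(k+1))).2 main
  rw [hd]
  push_cast
  calc ((k:ℝ)+1) * ((v+1)^(k+1+1))⁻¹ = ((k:ℝ)+1) / ((v+1)^(k+1+1)) := by
        rw [div_eq_mul_inv]
    _ ≤ ((v+1)^(k+1) - v^(k+1)) / (v^(k+1) * (v+1)^(k+1)) := h2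

lemma lemB {m : ℕ} (hm : 1 ≤ m) {v : ℝ} (hv : 0 < v) :
    (v^m)⁻¹ - ((v+1)^m)⁻¹ ≤ (m:ℝ) * (v^(m+1))⁻¹ := by
  obtain ⟨k, rfl⟩ : ∃ k, m = k + 1 := ⟨m - 1, by omega⟩
  have hv1 : (0:ℝ) < v + 1 := by linarith
  obtain ⟨_, hup⟩ := pow_succ_sub_bounds k hv.le
  have hd : (v^(k+1))⁻¹ - ((v+1)^(k+1))⁻¹
      = ((v+1)^(k+1) - v^(k+1)) / (v^(k+1) * (v+1)^(k+1)) := by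
    field_simp
  have main : ((v+1)^(k+1) - v^(k+1)) * v^(k+1+1)
      ≤ ((k:ℝ)+1) * (v^(k+1) * (v+1)^(k+1)) := by
    calc ((v+1)^(k+1) - v^(k+1)) * v^(k+1+1)
        ≤ (((k:ℝ)+1) * (v+1)^k) * v^(k+1+1) :=
          mul_le_mul_of_nonneg_right hup (by positivity)
      _ = (((k:ℝ)+1) * v^(k+1)) * ((v+1)^k * v) := by ring
      _ ≤ (((k:ℝ)+1) * v^(k+1)) * ((v+1)^k * (v+1)) := by
          apply mul_le_mul_of_nonneg_left _ (by positivity)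
          apply mul_le_mul_of_nonneg_left (by linarith) (by positivity)
      _ = ((k:ℝ)+1) * (v^(k+1) * (v+1)^(k+1)) := by ring
  have h2 := (div_le_div_iff₀ (by positivity : (0:ℝ) < v^(k+1) * (v+1)^(k+1))
      (by positivity : (0:ℝ) < v^(k+1+1))).2 main
  rw [hd]
  push_cast
  calc ((v+1)^(k+1) - v^(k+1)) / (v^(k+1) * (v+1)^(k+1)) ≤ ((k:ℝ)+1) / v^(k+1+1) := h2
    _ = ((k:ℝ)+1) * (v^(k+1+1))⁻¹ := by rw [div_eq_mul_inv]

lemma hasSum_telescope {b : ℕ → ℝ} (hb : ∀ j, b (j+1) ≤ b j)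
    (h0 : Tendsto b atTop (𝓝 0)) :
    HasSum (fun j => b j - b (j+1)) (b 0) := by
  have hnn : ∀ j, 0 ≤ b j - b (j+1) := fun j => sub_nonneg.2 (hb j)
  rw [hasSum_iff_tendsto_nat_of_nonneg hnn]
  have he : ∀ N, ∑ j ∈ Finset.range N, (b j - b (j+1)) = b 0 - b N :=
    fun N => Finset.sum_range_sub' b N
  simp only [he]
  simpa using tendsto_const_nhds.sub h0

lemma tendsto_inv_pow_zero {m : ℕ} (hm : 1 ≤ m) {x : ℝ} (hx : 0 < x) :
    Tendsto (fun j : ℕ => ((x + j) ^ m)⁻¹) atTop (𝓝 0) := by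
  have h1 : Tendsto (fun j : ℕ => x + (j:ℝ)) atTop atTop :=
    tendsto_atTop_add_const_left _ x tendsto_natCast_atTop_atTop
  have h2 : Tendsto (fun j : ℕ => (x + (j:ℝ)) ^ m) atTop atTop :=
    (tendsto_pow_atTop (by omega : m ≠ 0)).comp h1
  exact tendsto_inv_atTop_zero.comp h2

lemma telescope_P {m : ℕ} (hm : 1 ≤ m) {x : ℝ} (hx : 0 < x) :
    HasSum (fun j : ℕ => ((x + j)^m)⁻¹ - ((x + ((j:ℝ)+1))^m)⁻¹) ((x^m)⁻¹) := by
  have hb : ∀ j : ℕ, ((x + (((j:ℕ)+1:ℕ):ℝ))^m)⁻¹ ≤ ((x + j)^m)⁻¹ := by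
    intro j
    have hj : (0:ℝ) ≤ j := Nat.cast_nonneg j
    apply inv_anti₀ (by positivity)
    apply pow_le_pow_left₀ (by positivity)
    push_cast
    linarith
  have := hasSum_telescope (b := fun j : ℕ => ((x + j)^m)⁻¹) hb (tendsto_inv_pow_zero hm hx)
  simp only [Nat.cast_zero, add_zero] at this
  convert this using 2
  push_cast
  ring

lemma key_upper {m : ℕ} (hm : 1 ≤ m) {x : ℝ} (hx : 0 < x) :
    (m:ℝ) * (∑' j : ℕ, ((x + 1 + j)^(m+1))⁻¹) ≤ (x^m)⁻¹ := by
  have hx1 : 0 < x + 1 := by linarith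
  have hsum : Summable (fun j : ℕ => ((x + 1 + j)^(m+1))⁻¹) := by
    have := summable_P (m := m+1) (by omega) hx1
    exact this.congr (fun j => by norm_num)
  have htel := telescope_P hm hx
  have hterm : ∀ j : ℕ, (m:ℝ) * ((x + 1 + j)^(m+1))⁻¹
      ≤ ((x + j)^m)⁻¹ - ((x + ((j:ℝ)+1))^m)⁻¹ := by
    intro j
    have hj : (0:ℝ) ≤ j := Nat.cast_nonneg j
    have hv : (0:ℝ) < x + j := by linarith
    have := lemA hm hv
    have e1 : x + (j:ℝ) + 1 = x + 1 + j := by ring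
    rw [e1] at this
    have e2 : x + ((j:ℝ)+1) = x + (j:ℝ) + 1 := by ring
    rw [e2, e1]
    exact this
  calc (m:ℝ) * (∑' j : ℕ, ((x + 1 + j)^(m+1))⁻¹)
      = ∑' j : ℕ, (m:ℝ) * ((x + 1 + j)^(m+1))⁻¹ := (tsum_mul_left).symm
    _ ≤ ∑' j : ℕ, (((x + j)^m)⁻¹ - ((x + ((j:ℝ)+1))^m)⁻¹) :=
        Summable.tsum_le_tsum hterm (hsum.mul_left _) htel.summable
    _ = (x^m)⁻¹ := htel.tsum_eq

lemma key_lower {m : ℕ} (hm : 1 ≤ m) {x : ℝ} (hx : 0 < x) :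
    (x^m)⁻¹ ≤ (m:ℝ) * P (m+1) x := by
  have hsum : Summable (fun j : ℕ => ((x + j)^(m+1))⁻¹) := summable_P (by omega) hx
  have htel := telescope_P hm hx
  have hterm : ∀ j : ℕ, ((x + j)^m)⁻¹ - ((x + ((j:ℝ)+1))^m)⁻¹
      ≤ (m:ℝ) * ((x + j)^(m+1))⁻¹ := by
    intro j
    have hj : (0:ℝ) ≤ j := Nat.cast_nonneg j
    have hv : (0:ℝ) < x + j := by linarith
    have := lemB hm hv
    have e2 : x + ((j:ℝ)+1) = x + (j:ℝ) + 1 := by ring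
    rw [e2]
    exact this
  calc (x^m)⁻¹ = ∑' j : ℕ, (((x + j)^m)⁻¹ - ((x + ((j:ℝ)+1))^m)⁻¹) := htel.tsum_eq.symm
    _ ≤ ∑' j : ℕ, (m:ℝ) * ((x + j)^(m+1))⁻¹ :=
        Summable.tsum_le_tsum hterm htel.summable (hsum.mul_left _)
    _ = (m:ℝ) * P (m+1) x := tsum_mul_left

lemma finite_swap (c : ℕ → ℝ) (N : ℕ) :
    ∑ j ∈ Finset.range N, (j:ℝ) * c j
      = ∑ i ∈ Finset.range N, ∑ j ∈ Finset.Ico (i+1) N, c j := by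
  induction N with
  | zero => simp
  | succ N ih =>
    rw [Finset.sum_range_succ, ih, Finset.sum_range_succ]
    have h1 : ∀ i ∈ Finset.range N, ∑ j ∈ Finset.Ico (i+1) (N+1), c j
        = (∑ j ∈ Finset.Ico (i+1) N, c j) + c N := by
      intro i hi
      exact Finset.sum_Ico_succ_top (Finset.mem_range.1 hi) c
    rw [Finset.sum_congr rfl h1, Finset.sum_add_distrib, Finset.sum_const,
      Finset.card_range, Finset.Ico_self, Finset.sum_empty, nsmul_eq_mul]
    ring

lemma main_ineq {n : ℕ} (hn : 1 ≤ n) {x : ℝ} (hx : 0 < x) :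
    (n:ℝ) * P (n+1) x ≤ ((n:ℝ)+1) * x * P (n+2) x := by
  set c : ℕ → ℝ := fun j => ((x + j)^(n+2))⁻¹ with hc
  have hcn : ∀ j, 0 ≤ c j := fun j => by
    have : (0:ℝ) ≤ j := Nat.cast_nonneg j
    positivity
  have hsum_c : Summable c := summable_P (by omega) hx
  have hsum1 : Summable (fun j : ℕ => ((x + j)^(n+1))⁻¹) := summable_P (by omega) hx
  have hxj : ∀ j : ℕ, (x + (j:ℝ)) * c j = ((x + j)^(n+1))⁻¹ := by
    intro j
    have hj : (0:ℝ) ≤ j := Nat.cast_nonneg j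
    have hp : (0:ℝ) < x + j := by linarith
    rw [hc]
    field_simp
    ring
  have hsum_jc : Summable (fun j : ℕ => (j:ℝ) * c j) := by
    apply Summable.of_nonneg_of_le (fun j => mul_nonneg (Nat.cast_nonneg j) (hcn j))
      (fun j => ?_) hsum1
    calc (j:ℝ) * c j ≤ (x + j) * c j := by
          apply mul_le_mul_of_nonneg_right (by linarith) (hcn j)
      _ = ((x + j)^(n+1))⁻¹ := hxj j
  -- the key bound
  have key : ((n:ℝ)+1) * ∑' j : ℕ, (j:ℝ) * c j ≤ P (n+1) x := by
    rw [← tsum_mul_left]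
    apply Summable.tsum_le_of_sum_le ((hsum_jc.mul_left _))
    intro s
    obtain ⟨N, hN⟩ : ∃ N, s ⊆ Finset.range N := ⟨s.sup id + 1, fun j hj =>
      Finset.mem_range.2 (Nat.lt_succ_of_le (Finset.le_sup (f := id) hj))⟩
    have step1 : ∑ j ∈ s, ((n:ℝ)+1) * ((j:ℝ) * c j)
        ≤ ∑ j ∈ Finset.range N, ((n:ℝ)+1) * ((j:ℝ) * c j) := by
      apply Finset.sum_le_sum_of_subset_of_nonneg hN
      intro j _ _
      have := hcn j
      have : (0:ℝ) ≤ (j:ℝ) * c j := mul_nonneg (Nat.cast_nonneg j) (hcn j)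
      positivity
    have step2 : ∑ j ∈ Finset.range N, ((n:ℝ)+1) * ((j:ℝ) * c j)
        ≤ ∑ i ∈ Finset.range N, ((x + i)^(n+1))⁻¹ := by
      rw [← Finset.mul_sum, finite_swap, Finset.mul_sum]
      apply Finset.sum_le_sum
      intro i _
      -- (n+1) * ∑_{j ∈ Ico (i+1) N} c j ≤ ((x+i)^(n+1))⁻¹
      have hxi : (0:ℝ) < x + i := by
        have : (0:ℝ) ≤ i := Nat.cast_nonneg i; linarith
      have htail : Summable (fun k : ℕ => c (i+1+k)) := by
        have := (summable_nat_add_iff (i+1)).2 hsum_c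
        exact this.congr (fun k => by rw [Nat.add_comm k (i+1)])
      have hfin : ∑ j ∈ Finset.Ico (i+1) N, c j ≤ ∑' k : ℕ, c (i+1+k) := by
        rw [Finset.sum_Ico_eq_sum_range]
        exact Summable.sum_le_tsum _ (fun k _ => hcn _) htail
      have hku := key_upper (m := n+1) (by omega) hxi
      have heq : ∑' j : ℕ, (((x+i) + 1 + j)^(n+2))⁻¹ = ∑' k : ℕ, c (i+1+k) := by
        apply tsum_congr
        intro k
        rw [hc]
        push_cast
        ring_nf
      rw [heq] at hku
      calc ((n:ℝ)+1) * ∑ j ∈ Finset.Ico (i+1) N, c j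
          ≤ ((n:ℝ)+1) * ∑' k : ℕ, c (i+1+k) := by
            apply mul_le_mul_of_nonneg_left hfin (by positivity)
        _ ≤ ((x+i)^(n+1))⁻¹ := by
            convert hku using 2
            push_cast
            ring
    have step3 : ∑ i ∈ Finset.range N, ((x + i)^(n+1))⁻¹ ≤ P (n+1) x :=
      Summable.sum_le_tsum _ (fun i _ => by
        have : (0:ℝ) ≤ i := Nat.cast_nonneg i
        positivity) hsum1
    linarith
  -- expansion
  have e1 : ((n:ℝ)+1) * x * P (n+2) x
      = ((n:ℝ)+1) * (P (n+1) x - ∑' j : ℕ, (j:ℝ) * c j) := by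
    rw [mul_assoc]
    congr 1
    calc x * P (n+2) x = ∑' j : ℕ, x * c j := (tsum_mul_left (a := x) (f := c)).symm
      _ = ∑' j : ℕ, (((x + j)^(n+1))⁻¹ - (j:ℝ) * c j) := by
          apply tsum_congr
          intro j
          rw [← hxj j]
          ring
      _ = P (n+1) x - ∑' j : ℕ, (j:ℝ) * c j := Summable.tsum_sub hsum1 hsum_jc
  have hS : 0 ≤ ∑' j : ℕ, (j:ℝ) * c j :=
    tsum_nonneg (fun j => mul_nonneg (Nat.cast_nonneg j) (hcn j))
  rw [e1]
  nlinarith [key]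

lemma antitone_F {n : ℕ} (hn : 1 ≤ n) :
    AntitoneOn (fun x : ℝ => x ^ n * ((n.factorial : ℝ) * P (n+1) x)) (Set.Ioi 0) := by
  obtain ⟨k, rfl⟩ : ∃ k, n = k + 1 := ⟨n - 1, by omega⟩
  have hderiv : ∀ x : ℝ, 0 < x → HasDerivAt
      (fun x : ℝ => x ^ (k+1) * (((k+1).factorial : ℝ) * P (k+2) x))
      (((k:ℝ)+1) * x^k * (((k+1).factorial : ℝ) * P (k+2) x)
        + x^(k+1) * (((k+1).factorial : ℝ) * (-((k:ℝ)+2) * P (k+3) x))) x := by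
    intro x hx
    have h1 : HasDerivAt (fun y : ℝ => y ^ (k+1)) (((k:ℝ)+1) * x^k) x := by
      have := hasDerivAt_pow (k+1) x
      simpa using this
    have h2 : HasDerivAt (fun y : ℝ => ((k+1).factorial : ℝ) * P (k+2) y)
        (((k+1).factorial : ℝ) * (-((k:ℝ)+2) * P (k+3) x)) x := by
      have := (hasDerivAt_P (m := k+2) (by omega) hx).const_mul ((k+1).factorial : ℝ)
      refine this.congr_deriv ?_
      push_cast
      ring
    exact h1.mul h2
  apply antitoneOn_of_deriv_nonpos (convex_Ioi 0)
  · -- continuity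
    intro x hx
    exact ((hderiv x hx).continuousAt).continuousWithinAt
  · -- differentiability
    intro x hx
    rw [interior_Ioi] at hx
    exact ((hderiv x hx).differentiableAt).differentiableWithinAt
  · intro x hx
    rw [interior_Ioi] at hx
    have hx' : (0:ℝ) < x := hx
    rw [(hderiv x hx').deriv]
    -- nonpositivity from main_ineq at n = k+1
    have hmain := main_ineq (n := k+1) (by omega) hx'
    have hfac : (0:ℝ) < ((k+1).factorial : ℝ) := by positivity
    have hxk : (0:ℝ) ≤ x^k := by positivity
    -- (k+1) * P(k+2) ≤ (k+2) * x * P(k+3)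
    have h2 : ((k:ℝ)+1) * P (k+2) x ≤ ((k:ℝ)+2) * x * P (k+3) x := by
      have := hmain
      push_cast at this
      convert this using 2 <;> push_cast <;> ring_nf
    have h3 : ((k:ℝ)+1) * x^k * P (k+2) x ≤ ((k:ℝ)+2) * x^(k+1) * P (k+3) x := by
      have := mul_le_mul_of_nonneg_left h2 hxk
      calc ((k:ℝ)+1) * x^k * P (k+2) x = x^k * (((k:ℝ)+1) * P (k+2) x) := by ring
        _ ≤ x^k * (((k:ℝ)+2) * x * P (k+3) x) := this
        _ = ((k:ℝ)+2) * x^(k+1) * P (k+3) x := by ring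
    nlinarith [h3, hfac]

lemma abs_iteratedDeriv_digamma {m : ℕ} (hm : 1 ≤ m) {x : ℝ} (hx : 0 < x) :
    |iteratedDeriv m digamma x| = (m.factorial : ℝ) * P (m+1) x := by
  rw [iteratedDeriv_digamma hm x hx, abs_mul, abs_mul, abs_pow, abs_neg, abs_one,
    one_pow, one_mul, abs_of_nonneg (by positivity : (0:ℝ) ≤ (m.factorial : ℝ)),
    abs_of_nonneg (P_pos (m := m+1) (by omega) hx).le]

end Stmt16Aux

open Stmt16Aux in
theorem stmt16 (n : ℕ) (hn : 1 ≤ n) (c : ℝ) :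
    AntitoneOn (fun x : ℝ => x ^ c * |iteratedDeriv n digamma x|) (Set.Ioi 0) ↔
      c ≤ (n : ℝ) := by
  constructor
  · intro hA
    by_contra hc
    push_neg at hc
    -- lower bound f x ≥ C * x^(c-n) for x ≥ 1
    set C : ℝ := (n.factorial : ℝ) / n with hC
    have hCpos : 0 < C := by
      have h1 : (0:ℝ) < (n.factorial : ℝ) := by positivity
      have h2 : (0:ℝ) < (n:ℝ) := by exact_mod_cast hn
      positivity
    have hf1 : ∀ x : ℝ, 1 ≤ x →
        C * x ^ (c - (n:ℝ)) ≤ (1:ℝ) ^ c * |iteratedDeriv n digamma 1| := by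
      intro x hx1
      have hx : (0:ℝ) < x := by linarith
      have hmem : x ∈ Set.Ioi (0:ℝ) := hx
      have hmono : x ^ c * |iteratedDeriv n digamma x| ≤
          (1:ℝ) ^ c * |iteratedDeriv n digamma 1| := hA (Set.mem_Ioi.2 one_pos) hmem hx1
      refine le_trans ?_ hmono
      rw [abs_iteratedDeriv_digamma hn hx]
      have hkl := key_lower hn hx
      have hn0 : (0:ℝ) < (n:ℝ) := by exact_mod_cast hn
      have hP : (x^n)⁻¹ / n ≤ P (n+1) x := by
        rw [div_le_iff₀ hn0]
        linarith [hkl]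
      have hrp : (0:ℝ) < x ^ c := Real.rpow_pos_of_pos hx c
      calc C * x ^ (c - (n:ℝ))
          = x ^ c * (C * (x ^ (n:ℝ))⁻¹) := by
            rw [Real.rpow_sub hx]
            field_simp
        _ = x ^ c * ((n.factorial : ℝ) * ((x^n)⁻¹ / n)) := by
            rw [Real.rpow_natCast, hC]
            ring
        _ ≤ x ^ c * ((n.factorial : ℝ) * P (n+1) x) := by
            apply mul_le_mul_of_nonneg_left _ hrp.le
            apply mul_le_mul_of_nonneg_left hP (by positivity)
    -- contradiction via x → ∞
    have hpos : 0 < c - (n:ℝ) := by linarith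
    set B : ℝ := (1:ℝ) ^ c * |iteratedDeriv n digamma 1| with hB
    obtain ⟨x, hx1, hxB⟩ : ∃ x : ℝ, 1 ≤ x ∧ (B + 1) / C ≤ x ^ (c - (n:ℝ)) := by
      have h1 := (tendsto_rpow_atTop hpos).eventually_ge_atTop ((B + 1) / C)
      have h2 := (h1.and (eventually_ge_atTop (1:ℝ))).exists
      obtain ⟨x, hxa, hxb⟩ := h2
      exact ⟨x, hxb, hxa⟩
    have h3 : B + 1 ≤ C * x ^ (c - (n:ℝ)) := by
      rw [div_le_iff₀ hCpos] at hxB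
      linarith
    have h4 := hf1 x hx1
    linarith
  · intro hc
    have hant := antitone_F hn
    intro a ha b hb hab
    simp only
    have ha' : (0:ℝ) < a := ha
    have hb' : (0:ℝ) < b := hb
    rw [abs_iteratedDeriv_digamma hn ha', abs_iteratedDeriv_digamma hn hb']
    have ea : ∀ x : ℝ, 0 < x → x ^ c * ((n.factorial : ℝ) * P (n+1) x)
        = x ^ (c - (n:ℝ)) * (x ^ n * ((n.factorial : ℝ) * P (n+1) x)) := by
      intro x hx
      conv_rhs => rw [← Real.rpow_natCast x n, ← mul_assoc, ← Real.rpow_add hx]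
      norm_num
    rw [ea a ha', ea b hb']
    have h1 : b ^ (c - (n:ℝ)) ≤ a ^ (c - (n:ℝ)) :=
      Real.rpow_le_rpow_of_nonpos ha' hab (by linarith)
    have h2 := hant ha hb hab
    have h3 : (0:ℝ) ≤ b ^ n * ((n.factorial : ℝ) * P (n+1) b) := by
      have := (P_pos (m := n+1) (by omega) hb').le
      positivity
    have h4 : (0:ℝ) ≤ a ^ (c - (n:ℝ)) := (Real.rpow_pos_of_pos ha' _).le
    exact mul_le_mul h1 h2 h3 h4
end

section
/- Let f,g : [a,b] → ℝ be continuous functions that are differentiable on (a,b), and suppose g' ≠ 0 on (a,b). If f'/g' is increasing on (a,b), then the functions x ↦ (f(x)−f(a))/(g(x)−g(a)) and x ↦ (f(x)−f(b))/(g(x)−g(b)) are increasing on (a,b); likewise, if f'/g' is decreasing on (a,b), then both of these functions are decreasing on (a,b). -/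
open Set

private lemma med1 (p q r s : ℝ) (hq : 0 < q) (hs : 0 < s) (h : p/q ≤ r/s) :
    p/q ≤ (p+r)/(q+s) ∧ (p+r)/(q+s) ≤ r/s := by
  rw [div_le_div_iff₀ hq hs] at h
  constructor
  · rw [div_le_div_iff₀ hq (by linarith)]; nlinarith
  · rw [div_le_div_iff₀ (by linarith) hs]; nlinarith

private lemma med2 (p q r s : ℝ) (hq : q < 0) (hs : s < 0) (h : p/q ≤ r/s) :
    p/q ≤ (p+r)/(q+s) ∧ (p+r)/(q+s) ≤ r/s := by
  have := med1 (-p) (-q) (-r) (-s) (by linarith) (by linarith)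
    (by rwa [neg_div_neg_eq, neg_div_neg_eq])
  rwa [neg_div_neg_eq, neg_div_neg_eq, show -p + -r = -(p+r) by ring,
    show -q + -s = -(q+s) by ring, neg_div_neg_eq] at this

private lemma cauchy17 (f g : ℝ → ℝ) (u v : ℝ) (huv : u < v)
    (hfc : ContinuousOn f (Icc u v)) (hgc : ContinuousOn g (Icc u v))
    (hfd : DifferentiableOn ℝ f (Ioo u v)) (hgd : DifferentiableOn ℝ g (Ioo u v))
    (hg' : ∀ x ∈ Ioo u v, deriv g x ≠ 0) (hne : g v - g u ≠ 0) :
    ∃ c ∈ Ioo u v, (f v - f u) / (g v - g u) = deriv f c / deriv g c := by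
  obtain ⟨c, hc, heq⟩ := exists_ratio_deriv_eq_ratio_slope f huv hfc hfd g hgc hgd
  refine ⟨c, hc, ?_⟩
  rw [div_eq_div_iff hne (hg' c hc)]
  linear_combination -heq

private lemma gsign17 (a b : ℝ) (hab : a < b) (g : ℝ → ℝ)
    (hgc : ContinuousOn g (Icc a b))
    (hg' : ∀ x ∈ Ioo a b, deriv g x ≠ 0) :
    (∀ u ∈ Icc a b, ∀ v ∈ Icc a b, u < v → 0 < g v - g u) ∨
    (∀ u ∈ Icc a b, ∀ v ∈ Icc a b, u < v → g v - g u < 0) := by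
  have key : ∀ u ∈ Icc a b, ∀ v ∈ Icc a b, u < v → g u ≠ g v := by
    intro u hu v hv huv heq
    obtain ⟨c, hc, hc0⟩ := exists_deriv_eq_zero huv (hgc.mono (Icc_subset_Icc hu.1 hv.2)) heq
    exact hg' c ⟨lt_of_le_of_lt hu.1 hc.1, lt_of_lt_of_le hc.2 hv.2⟩ hc0
  have hinj : InjOn g (Icc a b) := by
    intro u hu v hv huv
    by_contra hne
    rcases Ne.lt_or_gt hne with h | h
    · exact key u hu v hv h huv
    · exact key v hv u hu h huv.symm
  rcases ContinuousOn.strictMonoOn_of_injOn_Icc' hab.le hgc hinj with h | h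
  · exact Or.inl fun u hu v hv huv => sub_pos.2 (h hu hv huv)
  · exact Or.inr fun u hu v hv huv => sub_neg.2 (h hu hv huv)

private lemma auxmono (a b : ℝ) (hab : a < b) (f g : ℝ → ℝ)
    (hfc : ContinuousOn f (Set.Icc a b)) (hgc : ContinuousOn g (Set.Icc a b))
    (hfd : ∀ x ∈ Set.Ioo a b, DifferentiableAt ℝ f x)
    (hgd : ∀ x ∈ Set.Ioo a b, DifferentiableAt ℝ g x)
    (hg' : ∀ x ∈ Set.Ioo a b, deriv g x ≠ 0)
    (hm : MonotoneOn (fun x => deriv f x / deriv g x) (Set.Ioo a b)) :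
    MonotoneOn (fun x => (f x - f a) / (g x - g a)) (Set.Ioo a b) ∧
    MonotoneOn (fun x => (f x - f b) / (g x - g b)) (Set.Ioo a b) := by
  have hsign := gsign17 a b hab g hgc hg'
  -- generic Cauchy on a subinterval
  have C : ∀ u v : ℝ, a ≤ u → u < v → v ≤ b → g v - g u ≠ 0 →
      ∃ c ∈ Ioo u v, (f v - f u) / (g v - g u) = deriv f c / deriv g c := by
    intro u v hau huv hvb hne
    have hsub : Ioo u v ⊆ Ioo a b := Ioo_subset_Ioo hau hvb
    exact cauchy17 f g u v huv (hfc.mono (Icc_subset_Icc hau hvb))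
      (hgc.mono (Icc_subset_Icc hau hvb))
      (fun z hz => (hfd z (hsub hz)).differentiableWithinAt)
      (fun z hz => (hgd z (hsub hz)).differentiableWithinAt)
      (fun z hz => hg' z (hsub hz)) hne
  have hamem : a ∈ Icc a b := left_mem_Icc.2 hab.le
  have hbmem : b ∈ Icc a b := right_mem_Icc.2 hab.le
  have hne : ∀ u v : ℝ, a ≤ u → u < v → v ≤ b → g v - g u ≠ 0 := by
    intro u v hau huv hvb
    rcases hsign with h | h
    · exact ne_of_gt (h u ⟨hau, huv.le.trans hvb⟩ v ⟨hau.trans huv.le, hvb⟩ huv)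
    · exact ne_of_lt (h u ⟨hau, huv.le.trans hvb⟩ v ⟨hau.trans huv.le, hvb⟩ huv)
  constructor
  · intro x hx y hy hxy
    rcases eq_or_lt_of_le hxy with rfl | hxy
    · exact le_refl _
    obtain ⟨d, hd, hdv⟩ := C a x le_rfl hx.1 hx.2.le (hne a x le_rfl hx.1 hx.2.le)
    obtain ⟨c, hc, hcv⟩ := C x y hx.1.le hxy hy.2.le (hne x y hx.1.le hxy hy.2.le)
    have hdc : d < c := hd.2.trans hc.1
    have hdmem : d ∈ Ioo a b := ⟨hd.1, hd.2.trans hx.2⟩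
    have hcmem : c ∈ Ioo a b := ⟨hx.1.trans hc.1, hc.2.trans hy.2⟩
    have hle : (f x - f a) / (g x - g a) ≤ (f y - f x) / (g y - g x) := by
      rw [hdv, hcv]; exact hm hdmem hcmem hdc.le
    have hkey : (f x - f a) / (g x - g a) ≤
        ((f x - f a) + (f y - f x)) / ((g x - g a) + (g y - g x)) := by
      rcases hsign with h | h
      · exact (med1 _ _ _ _ (h a hamem x ⟨hx.1.le, hx.2.le⟩ hx.1)
          (h x ⟨hx.1.le, hx.2.le⟩ y ⟨hy.1.le, hy.2.le⟩ hxy) hle).1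
      · exact (med2 _ _ _ _ (h a hamem x ⟨hx.1.le, hx.2.le⟩ hx.1)
          (h x ⟨hx.1.le, hx.2.le⟩ y ⟨hy.1.le, hy.2.le⟩ hxy) hle).1
    simpa [show (f x - f a) + (f y - f x) = f y - f a by ring,
      show (g x - g a) + (g y - g x) = g y - g a by ring] using hkey
  · intro x hx y hy hxy
    rcases eq_or_lt_of_le hxy with rfl | hxy
    · exact le_refl _
    obtain ⟨c, hc, hcv⟩ := C x y hx.1.le hxy hy.2.le (hne x y hx.1.le hxy hy.2.le)
    obtain ⟨e, he, hev⟩ := C y b hy.1.le hy.2 le_rfl (hne y b hy.1.le hy.2 le_rfl)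
    have hce : c < e := hc.2.trans he.1
    have hcmem : c ∈ Ioo a b := ⟨hx.1.trans hc.1, hc.2.trans hy.2⟩
    have hemem : e ∈ Ioo a b := ⟨hy.1.trans he.1, he.2⟩
    have hle : (f y - f x) / (g y - g x) ≤ (f b - f y) / (g b - g y) := by
      rw [hcv, hev]; exact hm hcmem hemem hce.le
    have hkey : ((f y - f x) + (f b - f y)) / ((g y - g x) + (g b - g y)) ≤
        (f b - f y) / (g b - g y) := by
      rcases hsign with h | h
      · exact (med1 _ _ _ _ (h x ⟨hx.1.le, hx.2.le⟩ y ⟨hy.1.le, hy.2.le⟩ hxy)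
          (h y ⟨hy.1.le, hy.2.le⟩ b hbmem hy.2) hle).2
      · exact (med2 _ _ _ _ (h x ⟨hx.1.le, hx.2.le⟩ y ⟨hy.1.le, hy.2.le⟩ hxy)
          (h y ⟨hy.1.le, hy.2.le⟩ b hbmem hy.2) hle).2
    have h1 : (f b - f x) / (g b - g x) ≤ (f b - f y) / (g b - g y) := by
      simpa [show (f y - f x) + (f b - f y) = f b - f x by ring,
        show (g y - g x) + (g b - g y) = g b - g x by ring] using hkey
    calc (f x - f b) / (g x - g b) = (f b - f x) / (g b - g x) := by
          rw [show f x - f b = -(f b - f x) by ring, show g x - g b = -(g b - g x) by ring,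
            neg_div_neg_eq]
      _ ≤ (f b - f y) / (g b - g y) := h1
      _ = (f y - f b) / (g y - g b) := by
          rw [show f y - f b = -(f b - f y) by ring, show g y - g b = -(g b - g y) by ring,
            neg_div_neg_eq]

theorem stmt17 (a b : ℝ) (hab : a < b) (f g : ℝ → ℝ)
    (hfc : ContinuousOn f (Set.Icc a b)) (hgc : ContinuousOn g (Set.Icc a b))
    (hfd : ∀ x ∈ Set.Ioo a b, DifferentiableAt ℝ f x)
    (hgd : ∀ x ∈ Set.Ioo a b, DifferentiableAt ℝ g x)
    (hg' : ∀ x ∈ Set.Ioo a b, deriv g x ≠ 0) :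
    (MonotoneOn (fun x => deriv f x / deriv g x) (Set.Ioo a b) →
      MonotoneOn (fun x => (f x - f a) / (g x - g a)) (Set.Ioo a b) ∧
      MonotoneOn (fun x => (f x - f b) / (g x - g b)) (Set.Ioo a b)) ∧
    (AntitoneOn (fun x => deriv f x / deriv g x) (Set.Ioo a b) →
      AntitoneOn (fun x => (f x - f a) / (g x - g a)) (Set.Ioo a b) ∧
      AntitoneOn (fun x => (f x - f b) / (g x - g b)) (Set.Ioo a b)) := by
  constructor
  · exact auxmono a b hab f g hfc hgc hfd hgd hg'
  · intro ha
    have hm : MonotoneOn (fun x => deriv (fun t => -f t) x / deriv g x) (Set.Ioo a b) := by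
      intro x hx y hy hxy
      simp only [deriv.fun_neg, neg_div]
      exact neg_le_neg (ha hx hy hxy)
    obtain ⟨h1, h2⟩ := auxmono a b hab (fun t => -f t) g hfc.neg hgc
      (fun x hx => (hfd x hx).neg) hgd hg' hm
    constructor
    · intro x hx y hy hxy
      have := h1 hx hy hxy
      simp only [show ∀ u v : ℝ, -u - -v = -(u - v) by intro u v; ring, neg_div,
        neg_le_neg_iff] at this
      exact this
    · intro x hx y hy hxy
      have := h2 hx hy hxy
      simp only [show ∀ u v : ℝ, -u - -v = -(u - v) by intro u v; ring, neg_div,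
        neg_le_neg_iff] at this
      exact this
end

section
/- Let 0<q<1. Then Γ_q(x) ≤ 1 for x > 0 if and only if 1 ≤ x ≤ 2. -/
open Real Filter Finset Topology

/-! Auxiliary lemmas for the q-Gamma inequality. -/

/-- Strict two-point AM-GM inequality. -/
lemma amgm_strict {p₁ p₂ w₁ w₂ : ℝ} (hp₁ : 0 < p₁) (hp₂ : 0 < p₂) (hne : p₁ ≠ p₂)
    (hw₁ : 0 < w₁) (hw₂ : 0 < w₂) (hw : w₁ + w₂ = 1) :
    p₁ ^ w₁ * p₂ ^ w₂ < w₁ * p₁ + w₂ * p₂ := by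
  have h := strictConcaveOn_log_Ioi.2 (Set.mem_Ioi.2 hp₁) (Set.mem_Ioi.2 hp₂) hne hw₁ hw₂ hw
  rw [smul_eq_mul, smul_eq_mul, smul_eq_mul, smul_eq_mul] at h
  have h2 : Real.log (p₁ ^ w₁ * p₂ ^ w₂) < Real.log (w₁ * p₁ + w₂ * p₂) := by
    rw [Real.log_mul (by positivity) (by positivity), Real.log_rpow hp₁, Real.log_rpow hp₂]
    exact h
  have hx : (0:ℝ) < p₁ ^ w₁ * p₂ ^ w₂ := by positivity
  exact (Real.log_lt_log_iff hx (by positivity)).1 h2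

lemma key_le {q a t : ℝ} (hq0 : 0 < q) (hq1 : q < 1) (ha0 : 0 < a) (ha1 : a < 1)
    (ht0 : 0 ≤ t) (ht1 : t ≤ 1) :
    (1 - a) ^ (1 - t) * (1 - a * q) ^ t ≤ 1 - a * q ^ t := by
  have haq : a * q < 1 := by nlinarith
  have h1 : q ^ t ≤ (1 - t) * 1 + t * q := by
    have := Real.geom_mean_le_arith_mean2_weighted (by linarith : (0:ℝ) ≤ 1 - t) ht0
      zero_le_one hq0.le (by ring)
    simpa [Real.one_rpow] using this
  have h2 : (1 - a) ^ (1 - t) * (1 - a * q) ^ t ≤ (1 - t) * (1 - a) + t * (1 - a * q) :=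
    Real.geom_mean_le_arith_mean2_weighted (by linarith) ht0 (by linarith) (by linarith) (by ring)
  nlinarith [mul_le_mul_of_nonneg_left h1 ha0.le]

lemma key_gt {q a t : ℝ} (hq0 : 0 < q) (hq1 : q < 1) (ha0 : 0 < a) (ha1 : a < 1)
    (hat : a * q ^ t < 1) (ht : t < 0 ∨ 1 < t) :
    1 - a * q ^ t < (1 - a) ^ (1 - t) * (1 - a * q) ^ t := by
  have haq : a * q < 1 := by nlinarith
  have hqt0 : 0 < q ^ t := Real.rpow_pos_of_pos hq0 _
  rcases ht with ht | ht
  · -- case t < 0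
    have h1t : (0:ℝ) < 1 - t := by linarith
    set s : ℝ := 1 / (1 - t) with hs
    have hs0 : 0 < s := by positivity
    have hs1 : s < 1 := by rw [hs, div_lt_one h1t]; linarith
    have hqt1 : 1 < q ^ t := (Real.one_lt_rpow_iff_of_pos hq0).2 (Or.inr ⟨hq1, ht⟩)
    have hA : (q ^ t) ^ s * q ^ (1 - s) < s * q ^ t + (1 - s) * q :=
      amgm_strict hqt0 hq0 (by intro h; rw [h] at hqt1; linarith) hs0 (by linarith) (by ring)
    have hone : (q ^ t) ^ s * q ^ (1 - s) = 1 := by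
      rw [← Real.rpow_mul hq0.le, ← Real.rpow_add hq0,
        show t * s + (1 - s) = 0 by rw [hs]; field_simp; ring, Real.rpow_zero]
    rw [hone] at hA
    have hmid : s * (1 - a * q ^ t) + (1 - s) * (1 - a * q) < 1 - a := by
      nlinarith [mul_lt_mul_of_pos_left hA ha0]
    have hAM : (1 - a * q ^ t) ^ s * (1 - a * q) ^ (1 - s)
        ≤ s * (1 - a * q ^ t) + (1 - s) * (1 - a * q) :=
      Real.geom_mean_le_arith_mean2_weighted hs0.le (by linarith) (by linarith) (by linarith)
        (by ring)
    have hchain : (1 - a * q ^ t) ^ s * (1 - a * q) ^ (1 - s) < 1 - a := lt_of_le_of_lt hAM hmid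
    have hn1 : (0:ℝ) ≤ (1 - a * q ^ t) ^ s := Real.rpow_nonneg (by linarith) _
    have hn2 : (0:ℝ) ≤ (1 - a * q) ^ (1 - s) := Real.rpow_nonneg (by linarith) _
    have hpow : ((1 - a * q ^ t) ^ s * (1 - a * q) ^ (1 - s)) ^ (1 - t) < (1 - a) ^ (1 - t) :=
      Real.rpow_lt_rpow (mul_nonneg hn1 hn2) hchain h1t
    rw [Real.mul_rpow hn1 hn2, ← Real.rpow_mul (by linarith),
      ← Real.rpow_mul (by linarith), show s * (1 - t) = 1 by rw [hs]; field_simp,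
      show (1 - s) * (1 - t) = -t by rw [hs]; field_simp; ring, Real.rpow_one] at hpow
    -- hpow : (1 - a*q^t) * (1-a*q)^(-t) < (1-a)^(1-t)
    have hBpos : (0:ℝ) < (1 - a * q) ^ t := Real.rpow_pos_of_pos (by linarith) _
    have := mul_lt_mul_of_pos_right hpow hBpos
    have hcanc : (1 - a * q) ^ (-t) * (1 - a * q) ^ t = 1 := by
      rw [← Real.rpow_add (by linarith)]; norm_num
    calc 1 - a * q ^ t = (1 - a * q ^ t) * ((1 - a * q) ^ (-t) * (1 - a * q) ^ t) := by
          rw [hcanc, mul_one]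
      _ = (1 - a * q ^ t) * (1 - a * q) ^ (-t) * (1 - a * q) ^ t := by ring
      _ < (1 - a) ^ (1 - t) * (1 - a * q) ^ t := this
  · -- case 1 < t
    have ht0 : (0:ℝ) < t := by linarith
    set s : ℝ := 1 / t with hs
    have hs0 : 0 < s := by positivity
    have hs1 : s < 1 := by rw [hs, div_lt_one ht0]; linarith
    have hqt1 : q ^ t < 1 := Real.rpow_lt_one hq0.le hq1 ht0
    have hA : (q ^ t) ^ s * 1 ^ (1 - s) < s * q ^ t + (1 - s) * 1 :=
      amgm_strict hqt0 one_pos (ne_of_lt hqt1) hs0 (by linarith) (by ring)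
    have hone : (q ^ t) ^ s = q := by
      rw [← Real.rpow_mul hq0.le, show t * s = 1 by rw [hs]; field_simp, Real.rpow_one]
    rw [hone, Real.one_rpow, mul_one] at hA
    have hmid : s * (1 - a * q ^ t) + (1 - s) * (1 - a) < 1 - a * q := by
      nlinarith [mul_lt_mul_of_pos_left hA ha0]
    have hAM : (1 - a * q ^ t) ^ s * (1 - a) ^ (1 - s)
        ≤ s * (1 - a * q ^ t) + (1 - s) * (1 - a) :=
      Real.geom_mean_le_arith_mean2_weighted hs0.le (by linarith) (by linarith) (by linarith)
        (by ring)
    have hchain : (1 - a * q ^ t) ^ s * (1 - a) ^ (1 - s) < 1 - a * q := lt_of_le_of_lt hAM hmid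
    have hn1 : (0:ℝ) ≤ (1 - a * q ^ t) ^ s := Real.rpow_nonneg (by linarith) _
    have hn2 : (0:ℝ) ≤ (1 - a) ^ (1 - s) := Real.rpow_nonneg (by linarith) _
    have hpow : ((1 - a * q ^ t) ^ s * (1 - a) ^ (1 - s)) ^ t < (1 - a * q) ^ t :=
      Real.rpow_lt_rpow (mul_nonneg hn1 hn2) hchain ht0
    rw [Real.mul_rpow hn1 hn2, ← Real.rpow_mul (by linarith),
      ← Real.rpow_mul (by linarith), show s * t = 1 by rw [hs]; field_simp,
      show (1 - s) * t = t - 1 by rw [hs]; field_simp, Real.rpow_one] at hpow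
    -- hpow : (1 - a*q^t) * (1-a)^(t-1) < (1-a*q)^t
    have hApos : (0:ℝ) < (1 - a) ^ (1 - t) := Real.rpow_pos_of_pos (by linarith) _
    have := mul_lt_mul_of_pos_left hpow hApos
    have hcanc : (1 - a) ^ (1 - t) * (1 - a) ^ (t - 1) = 1 := by
      rw [← Real.rpow_add (by linarith)]; norm_num
    calc 1 - a * q ^ t = (1 - a) ^ (1 - t) * ((1 - a * q ^ t) * (1 - a) ^ (t - 1)) := by
          rw [show (1 - a) ^ (1 - t) * ((1 - a * q ^ t) * (1 - a) ^ (t - 1))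
              = (1 - a * q ^ t) * ((1 - a) ^ (1 - t) * (1 - a) ^ (t - 1)) by ring, hcanc, mul_one]
      _ < (1 - a) ^ (1 - t) * (1 - a * q) ^ t := this

lemma div_le_rpow_aux {A B C t : ℝ} (hA : 0 < A) (hB : 0 < B) (hC : 0 < C)
    (h : A ^ (1 - t) * B ^ t ≤ C) : A / C ≤ (A / B) ^ t := by
  rw [Real.div_rpow hA.le hB.le, div_le_div_iff₀ hC (by positivity)]
  have hA' : A ^ (1 - t) * A ^ t = A := by rw [← Real.rpow_add hA]; norm_num
  calc A * B ^ t = (A ^ (1 - t) * B ^ t) * A ^ t := by nth_rewrite 1 [← hA']; ring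
    _ ≤ C * A ^ t := mul_le_mul_of_nonneg_right h (by positivity)
    _ = A ^ t * C := mul_comm _ _

lemma rpow_lt_div_aux {A B C t : ℝ} (hA : 0 < A) (hB : 0 < B) (hC : 0 < C)
    (h : C < A ^ (1 - t) * B ^ t) : (A / B) ^ t < A / C := by
  rw [Real.div_rpow hA.le hB.le, div_lt_div_iff₀ (by positivity) hC]
  have hA' : A ^ (1 - t) * A ^ t = A := by rw [← Real.rpow_add hA]; norm_num
  calc A ^ t * C < A ^ t * (A ^ (1 - t) * B ^ t) := by
        exact mul_lt_mul_of_pos_left h (by positivity)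
    _ = A * B ^ t := by rw [show A ^ t * (A ^ (1 - t) * B ^ t) = (A ^ (1 - t) * A ^ t) * B ^ t
          from by ring, hA']

lemma tele0 {q : ℝ} (hq0 : 0 < q) (hq1 : q < 1) :
    ∀ n : ℕ, ∏ j ∈ Finset.range n, (1 - q ^ (j + 1)) / (1 - q ^ (j + 2))
      = (1 - q) / (1 - q ^ (n + 1)) := by
  have hne : ∀ k : ℕ, k ≠ 0 → (1:ℝ) - q ^ k ≠ 0 := by
    intro k hk
    have := pow_lt_one₀ hq0.le hq1 hk
    linarith
  intro n
  induction n with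
  | zero => rw [Finset.prod_range_zero, pow_one, eq_comm, div_self (by linarith)]
  | succ n ih =>
    rw [Finset.prod_range_succ, ih, show n + 1 + 1 = n + 2 by omega]
    field_simp [hne (n+1) (by omega), hne (n+2) (by omega)]

lemma tele1 {q : ℝ} (hq0 : 0 < q) (hq1 : q < 1) :
    ∀ n : ℕ, ∏ j ∈ Finset.range n, (1 - q ^ (j + 2)) / (1 - q ^ (j + 3))
      = (1 - q ^ 2) / (1 - q ^ (n + 2)) := by
  have hne : ∀ k : ℕ, k ≠ 0 → (1:ℝ) - q ^ k ≠ 0 := by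
    intro k hk
    have := pow_lt_one₀ hq0.le hq1 hk
    linarith
  intro n
  induction n with
  | zero => rw [Finset.prod_range_zero, show (0:ℕ) + 2 = 2 by omega, eq_comm,
      div_self (hne 2 (by omega))]
  | succ n ih =>
    rw [Finset.prod_range_succ, ih, show n + 1 + 2 = n + 3 by omega]
    field_simp [hne (n+2) (by omega), hne (n+3) (by omega)]

 /-- The q-gamma function for `0 < q < 1`:
`Γ_q(x) = (1-q)^{1-x} ∏_{j=0}^∞ (1-q^{j+1})/(1-q^{j+x})`. -/
noncomputable def qGamma (q x : ℝ) : ℝ :=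
  (1 - q) ^ (1 - x) * ∏' j : ℕ, (1 - q ^ (j + 1)) / (1 - q ^ ((j : ℝ) + x))

set_option maxHeartbeats 2000000 in
theorem stmt18 (q : ℝ) (hq0 : 0 < q) (hq1 : q < 1) (x : ℝ) (hx : 0 < x) :
    qGamma q x ≤ 1 ↔ 1 ≤ x ∧ x ≤ 2 := by
  have hq1' : (0:ℝ) < 1 - q := by linarith
  set f : ℕ → ℝ := fun j => (1 - q ^ (j + 1)) / (1 - q ^ ((j : ℝ) + x)) with hf
  have hpowlt : ∀ k : ℕ, k ≠ 0 → q ^ k < 1 := fun k hk => pow_lt_one₀ hq0.le hq1 hk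
  have hA : ∀ j : ℕ, (0:ℝ) < 1 - q ^ (j + 1) := fun j => by
    have := hpowlt (j + 1) (by omega); linarith
  have hB : ∀ j : ℕ, (0:ℝ) < 1 - q ^ (j + 2) := fun j => by
    have := hpowlt (j + 2) (by omega); linarith
  have hqjx : ∀ j : ℕ, q ^ ((j : ℝ) + x) = q ^ (j + 1) * q ^ (x - 1) := by
    intro j
    rw [show ((j : ℝ) + x) = (((j + 1 : ℕ)) : ℝ) + (x - 1) by push_cast; ring,
      Real.rpow_add hq0, Real.rpow_natCast]
  have hClt : ∀ j : ℕ, q ^ ((j : ℝ) + x) < 1 := fun j =>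
    Real.rpow_lt_one hq0.le hq1 (by positivity)
  have hC : ∀ j : ℕ, (0:ℝ) < 1 - q ^ ((j : ℝ) + x) := fun j => by have := hClt j; linarith
  have hfpos : ∀ j, 0 < f j := fun j => div_pos (hA j) (hC j)
  -- |log(1-u)| bound
  have habslog : ∀ u mm : ℝ, 0 ≤ u → 0 < mm → mm ≤ 1 - u → |Real.log (1 - u)| ≤ u / mm := by
    intro u mm hu hmm h
    have h1u : 0 < 1 - u := lt_of_lt_of_le hmm h
    have hlog0 : Real.log (1 - u) ≤ 0 := Real.log_nonpos (by linarith) (by linarith)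
    rw [abs_of_nonpos hlog0, ← Real.log_inv]
    have h2 : Real.log (1 - u)⁻¹ ≤ (1 - u)⁻¹ - 1 := Real.log_le_sub_one_of_pos (by positivity)
    have h3 : (1 - u)⁻¹ - 1 = u / (1 - u) := by field_simp; ring
    have h4 : u / (1 - u) ≤ u / mm := by gcongr
    linarith
  have hqx1 : q ^ x < 1 := Real.rpow_lt_one hq0.le hq1 hx
  set m : ℝ := min (1 - q) (1 - q ^ x) with hmm
  have hm0 : (0:ℝ) < m := lt_min hq1' (by linarith)
  have hlog : Summable fun j => Real.log (f j) := by
    apply Summable.of_norm_bounded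
      ((summable_geometric_of_lt_one hq0.le hq1).mul_left (2 / m))
    intro j
    have e1 : Real.log (f j) = Real.log (1 - q ^ (j + 1)) - Real.log (1 - q ^ ((j:ℝ) + x)) :=
      Real.log_div (hA j).ne' (hC j).ne'
    have hstep : q ^ (j + 1) ≤ q ^ j := by
      calc q ^ (j + 1) = q ^ j * q := pow_succ q j
        _ ≤ q ^ j * 1 := by
            have := pow_nonneg hq0.le j
            nlinarith
        _ = q ^ j := mul_one _
    have b1 : |Real.log (1 - q ^ (j + 1))| ≤ q ^ j / m := by
      refine le_trans (habslog _ m (by positivity) hm0 ?_) ?_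
      · have h1 : q ^ (j + 1) ≤ q := by
          calc q ^ (j + 1) = q ^ j * q := pow_succ q j
            _ ≤ 1 * q := mul_le_mul_of_nonneg_right (pow_le_one₀ hq0.le hq1.le) hq0.le
            _ = q := one_mul q
        have := min_le_left (1 - q) (1 - q ^ x)
        rw [← hmm] at this
        linarith
      · gcongr
    have b2 : |Real.log (1 - q ^ ((j:ℝ) + x))| ≤ q ^ j / m := by
      have hjx0 : (0:ℝ) ≤ q ^ ((j:ℝ) + x) := Real.rpow_nonneg hq0.le _
      refine le_trans (habslog _ m hjx0 hm0 ?_) ?_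
      · have h5 : q ^ ((j:ℝ) + x) ≤ q ^ x :=
          Real.rpow_le_rpow_of_exponent_ge hq0 hq1.le (le_add_of_nonneg_left (Nat.cast_nonneg j))
        have := min_le_right (1 - q) (1 - q ^ x)
        rw [← hmm] at this
        linarith
      · have h5 : q ^ ((j:ℝ) + x) ≤ q ^ (j:ℝ) :=
          Real.rpow_le_rpow_of_exponent_ge hq0 hq1.le (by linarith)
        rw [Real.rpow_natCast] at h5
        gcongr
    calc ‖Real.log (f j)‖
        = |Real.log (1 - q ^ (j + 1)) - Real.log (1 - q ^ ((j:ℝ) + x))| := by rw [e1]; rfl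
      _ ≤ |Real.log (1 - q ^ (j + 1))| + |Real.log (1 - q ^ ((j:ℝ) + x))| := by
          rw [sub_eq_add_neg]
          exact (abs_add_le _ _).trans (by rw [abs_neg])
      _ ≤ q ^ j / m + q ^ j / m := add_le_add b1 b2
      _ = 2 / m * q ^ j := by ring
  have hmul : Multipliable f :=
    Real.multipliable_of_summable_log hfpos hlog
  set r : ℕ → ℝ := fun j => (1 - q ^ (j + 1)) / (1 - q ^ (j + 2)) with hrdef
  have hrpos : ∀ j, 0 < r j := fun j => div_pos (hA j) (hB j)
  have hT : Filter.Tendsto (fun n => ∏ j ∈ Finset.range n, f j) atTop (𝓝 (∏' j, f j)) :=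
    hmul.hasProd.tendsto_prod_nat
  have hlim : ∀ c : ℝ, 0 < c → ∀ k : ℕ, Filter.Tendsto
      (fun n : ℕ => (c / (1 - q ^ (n + k))) ^ (x - 1)) atTop (𝓝 (c ^ (x - 1))) := by
    intro c hc k
    have h1 : Filter.Tendsto (fun n : ℕ => q ^ (n + k)) atTop (𝓝 0) :=
      (tendsto_pow_atTop_nhds_zero_of_lt_one hq0.le hq1).comp (tendsto_add_atTop_nat k)
    have h3 : Filter.Tendsto (fun n : ℕ => (1:ℝ) - q ^ (n + k)) atTop (𝓝 1) := by
      simpa using tendsto_const_nhds.sub h1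
    have h2 : Filter.Tendsto (fun n : ℕ => c / (1 - q ^ (n + k))) atTop (𝓝 c) := by
      have h5 := (tendsto_const_nhds (x := c)).div h3 one_ne_zero; rw [div_one] at h5; exact h5
    have h4 : ContinuousAt (fun y : ℝ => y ^ (x - 1)) c :=
      Real.continuousAt_rpow_const c (x - 1) (Or.inl hc.ne')
    exact h4.tendsto.comp h2
  have hfle : 1 ≤ x → x ≤ 2 → ∀ j : ℕ, f j ≤ r j ^ (x - 1) := by
    intro h1 h2 j
    have hkey := key_le hq0 hq1 (pow_pos hq0 (j + 1)) (hpowlt (j + 1) (by omega))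
      (by linarith : (0:ℝ) ≤ x - 1) (by linarith : x - 1 ≤ 1)
    rw [show q ^ (j + 1) * q = q ^ (j + 2) by ring, ← hqjx j] at hkey
    exact div_le_rpow_aux (hA j) (hB j) (hC j) hkey
  have hfge : (x - 1 < 0 ∨ 1 < x - 1) → ∀ j : ℕ, r j ^ (x - 1) < f j := by
    intro hcase j
    have hat : q ^ (j + 1) * q ^ (x - 1) < 1 := by rw [← hqjx j]; exact hClt j
    have hkey := key_gt hq0 hq1 (pow_pos hq0 (j + 1)) (hpowlt (j + 1) (by omega)) hat hcase
    rw [show q ^ (j + 1) * q = q ^ (j + 2) by ring, ← hqjx j] at hkey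
    exact rpow_lt_div_aux (hA j) (hB j) (hC j) hkey
  have main_le : 1 ≤ x → x ≤ 2 → qGamma q x ≤ 1 := by
    intro h1 h2
    have hbound : ∀ n : ℕ,
        ∏ j ∈ Finset.range n, f j ≤ ((1 - q) / (1 - q ^ (n + 1))) ^ (x - 1) := by
      intro n
      calc ∏ j ∈ Finset.range n, f j ≤ ∏ j ∈ Finset.range n, r j ^ (x - 1) :=
            Finset.prod_le_prod (fun j _ => (hfpos j).le) (fun j _ => hfle h1 h2 j)
        _ = (∏ j ∈ Finset.range n, r j) ^ (x - 1) :=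
            Real.finset_prod_rpow _ _ (fun j _ => (hrpos j).le) _
        _ = ((1 - q) / (1 - q ^ (n + 1))) ^ (x - 1) := by
            congr 1
            rw [show (∏ j ∈ Finset.range n, r j)
              = ∏ j ∈ Finset.range n, (1 - q ^ (j + 1)) / (1 - q ^ (j + 2)) from rfl]
            exact tele0 hq0 hq1 n
    have hle : (∏' j, f j) ≤ (1 - q) ^ (x - 1) :=
      le_of_tendsto_of_tendsto' hT (hlim (1 - q) hq1' 1) hbound
    have hpos : (0:ℝ) < (1 - q) ^ (1 - x) := Real.rpow_pos_of_pos hq1' _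
    calc qGamma q x = (1 - q) ^ (1 - x) * ∏' j, f j := rfl
      _ ≤ (1 - q) ^ (1 - x) * (1 - q) ^ (x - 1) := mul_le_mul_of_nonneg_left hle hpos.le
      _ = 1 := by rw [← Real.rpow_add hq1', show (1 - x) + (x - 1) = 0 by ring, Real.rpow_zero]
  have main_gt : x < 1 ∨ 2 < x → 1 < qGamma q x := by
    intro hcase
    have hcase' : x - 1 < 0 ∨ 1 < x - 1 := by
      rcases hcase with h | h
      exacts [Or.inl (by linarith), Or.inr (by linarith)]
    have hlog' : Summable fun j => Real.log (f (j + 1)) :=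
      (summable_nat_add_iff (f := fun j => Real.log (f j)) 1).2 hlog
    have hmul' : Multipliable fun j => f (j + 1) :=
      Real.multipliable_of_summable_log (fun j => hfpos (j + 1)) hlog'
    have hT' : Filter.Tendsto (fun n => ∏ j ∈ Finset.range n, f (j + 1)) atTop
        (𝓝 (∏' j, f (j + 1))) := hmul'.hasProd.tendsto_prod_nat
    have hq2 : (0:ℝ) < 1 - q ^ 2 := by have := hpowlt 2 (by omega); linarith
    have hbound : ∀ n : ℕ, ((1 - q ^ 2) / (1 - q ^ (n + 2))) ^ (x - 1)
        ≤ ∏ j ∈ Finset.range n, f (j + 1) := by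
      intro n
      calc ((1 - q ^ 2) / (1 - q ^ (n + 2))) ^ (x - 1)
          = (∏ j ∈ Finset.range n, (1 - q ^ (j + 2)) / (1 - q ^ (j + 3))) ^ (x - 1) := by
            rw [tele1 hq0 hq1 n]
        _ = (∏ j ∈ Finset.range n, r (j + 1)) ^ (x - 1) := by
            congr 1
        _ = ∏ j ∈ Finset.range n, r (j + 1) ^ (x - 1) :=
            (Real.finset_prod_rpow _ _ (fun j _ => (hrpos (j + 1)).le) _).symm
        _ ≤ ∏ j ∈ Finset.range n, f (j + 1) :=
            Finset.prod_le_prod (fun j _ => Real.rpow_nonneg (hrpos (j + 1)).le _)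
              (fun j _ => (hfge hcase' (j + 1)).le)
    have hS : (1 - q ^ 2) ^ (x - 1) ≤ ∏' j, f (j + 1) :=
      le_of_tendsto_of_tendsto' (hlim (1 - q ^ 2) hq2 2) hT' hbound
    have hSpos : (0:ℝ) < ∏' j, f (j + 1) :=
      lt_of_lt_of_le (Real.rpow_pos_of_pos hq2 _) hS
    have hsplit : (∏' j, f j) = f 0 * ∏' j, f (j + 1) := tprod_eq_zero_mul' hmul'
    have hf0 : r 0 ^ (x - 1) < f 0 := hfge hcase' 0
    have hr0pos : 0 < r 0 := hrpos 0
    have hr0 : r 0 * (1 - q ^ 2) = 1 - q := by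
      have : r 0 = (1 - q) / (1 - q ^ 2) := by
        simp only [hrdef]
        norm_num
      rw [this, div_mul_cancel₀ _ hq2.ne']
    have hprod : (1 - q) ^ (x - 1) < ∏' j, f j := by
      rw [hsplit]
      calc (1 - q) ^ (x - 1) = (r 0 * (1 - q ^ 2)) ^ (x - 1) := by rw [hr0]
        _ = r 0 ^ (x - 1) * (1 - q ^ 2) ^ (x - 1) := Real.mul_rpow hr0pos.le hq2.le
        _ ≤ r 0 ^ (x - 1) * ∏' j, f (j + 1) :=
            mul_le_mul_of_nonneg_left hS (Real.rpow_nonneg hr0pos.le _)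
        _ < f 0 * ∏' j, f (j + 1) := mul_lt_mul_of_pos_right hf0 hSpos
    have hpos : (0:ℝ) < (1 - q) ^ (1 - x) := Real.rpow_pos_of_pos hq1' _
    calc (1:ℝ) = (1 - q) ^ (1 - x) * (1 - q) ^ (x - 1) := by
          rw [← Real.rpow_add hq1', show (1 - x) + (x - 1) = 0 by ring, Real.rpow_zero]
      _ < (1 - q) ^ (1 - x) * ∏' j, f j := mul_lt_mul_of_pos_left hprod hpos
      _ = qGamma q x := rfl
  constructor
  · intro h
    by_contra hc
    rcases not_and_or.1 hc with h1 | h2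
    · have := main_gt (Or.inl (lt_of_not_ge h1)); linarith
    · have := main_gt (Or.inr (lt_of_not_ge h2)); linarith
  · rintro ⟨h1, h2⟩
    exact main_le h1 h2
end
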